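/- Let A be a commutative unital ring, let π be an ideal of A, and let n ≥ 3. For all x ∈ A, all y, z ∈ π, and all indices k ≠ l, the (k,l)-suspension of the symbol S(x,y;z) lies in the true elementary subgroup F_n(π). -/

import Mathlib

open Matrix

/-- `SL n A` is the special linear group `SL_n(A)`. -/
abbrev SL (n : ℕ) (A : Type) [CommRing A] : Type := Matrix.SpecialLinearGroup (Fin n) A

/-- The elementary matrix `e_{ij}(a) = 1_n + a·e_{ij}` as an element of `SL_n(A)` (for `i ≠ j`). -/
def elem (A : Type) [CommRing A] {n : ℕ} (i j : Fin n) (hij : i ≠ j) (a : A) : SL n A :=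
  ⟨Matrix.transvection i j a, Matrix.det_transvection_of_ne i j hij a⟩

/-- The true elementary subgroup `F_n(π)`: the subgroup of `SL_n(A)` generated by the
elementary matrices with coefficients in the ideal `π`. -/
def Fgrp (A : Type) [CommRing A] (n : ℕ) (π : Ideal A) : Subgroup (SL n A) :=
  Subgroup.closure {x | ∃ (i j : Fin n) (hij : i ≠ j), ∃ a ∈ π, x = elem A i j hij a}

/-- The `(k,l)`-suspension of the symbol `S(x,y;z)`: the matrix obtained from the identity
matrix `1_n` by grafting `1+xyz` in the `(k,k)`-entry, `-x²z` in the `(k,l)`-entry,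
`y²z` in the `(l,k)`-entry and `1-xyz` in the `(l,l)`-entry. -/
def suspMat (A : Type) [CommRing A] {n : ℕ} (k l : Fin n) (x y z : A) :
    Matrix (Fin n) (Fin n) A := fun p q =>
  if p = k ∧ q = k then 1 + x * y * z
  else if p = k ∧ q = l then -(x ^ 2 * z)
  else if p = l ∧ q = k then y ^ 2 * z
  else if p = l ∧ q = l then 1 - x * y * z
  else if p = q then 1 else 0

lemma suspMat_eq (A : Type) [CommRing A] {n : ℕ} (k l : Fin n) (hkl : k ≠ l) (x y z : A) :
    suspMat A k l x y z =
      1 + Matrix.replicateCol (Fin 1) (fun p => if p = k then x * z else if p = l then y * z else 0) *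
        Matrix.replicateRow (Fin 1) (fun q => if q = k then y else if q = l then -x else 0) := by
  ext p q
  simp only [suspMat, Matrix.add_apply, Matrix.mul_apply, Matrix.replicateCol_apply, Matrix.replicateRow_apply,
    Finset.univ_unique, Finset.sum_singleton, Matrix.one_apply]
  split_ifs <;> simp_all <;> ring

lemma suspMat_det (A : Type) [CommRing A] {n : ℕ} (k l : Fin n) (hkl : k ≠ l) (x y z : A) :
    (suspMat A k l x y z).det = 1 := by
  rw [suspMat_eq A k l hkl]
  erw [Matrix.det_one_add_replicateCol_mul_replicateRow (ι := Fin 1)]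
  have : (fun q => if q = k then y else if q = l then -x else 0) ⬝ᵥ
      (fun p => if p = k then x * z else if p = l then y * z else 0) = 0 := by
    unfold dotProduct
    have h : ∀ q : Fin n, (if q = k then y else if q = l then -x else 0) *
        (if q = k then x * z else if q = l then y * z else 0)
        = (if q = k then y * (x * z) else 0) + (if q = l then -x * (y * z) else 0) := by
      intro q
      split_ifs with h1 h2 <;> simp_all
    simp only [h, Finset.sum_add_distrib, Finset.sum_ite_eq', Finset.mem_univ, if_true]
    ring
  rw [this, add_zero]

/-- The `(k,l)`-suspension of the symbol `S(x,y;z)` as an element of `SL_n(A)` (for `k ≠ l`). -/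
def suspS (A : Type) [CommRing A] {n : ℕ} (k l : Fin n) (hkl : k ≠ l) (x y z : A) : SL n A :=
  ⟨suspMat A k l x y z, suspMat_det A k l hkl x y z⟩

/-! Pick a third index `m`. Since `S(x,y;z) - 1 = (xz E_km + yz E_lm)(y E_mk - x E_ml)` is a
product of two square-zero matrices whose reverse product vanishes, the suspension is the
commutator `[e_km(xz) e_lm(yz), e_mk(y) e_ml(-x)]`. Every factor lies in `F_n(π)` except
`e_ml(-x)`, so it suffices that conjugation by `e_ml(-x)` keeps `e_km(xz) e_lm(yz)` inside
`F_n(π)`. For `e_km(xz)` this is a Chevalley commutator formula. Although `F_n(π)` need not be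
normal, the conjugate of `e_lm(yz)` stays in it as well: `e_lm(yz) = [e_lk(y), e_km(z)]` with
both entries in `π`, and conjugating each of the two factors by `e_ml(-x)` only multiplies it by
an elementary matrix with entry in `π`. -/

open scoped commutatorElement

theorem one_add_mul_one_add_mul_one_sub_mul_one_sub {R : Type*} [Ring R] {a b : R}
    (ha : a * a = 0) (hb : b * b = 0) (hba : b * a = 0) :
    (1 + a) * (1 + b) * (1 - a) * (1 - b) = 1 + a * b := by
  simp only [add_mul, mul_add, sub_mul, mul_sub, one_mul, mul_one, mul_assoc, ha, hb, hba,
    mul_zero, zero_mul]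
  abel

section elem

variable {A : Type} [CommRing A] {n : ℕ}

theorem coe_elem (i j : Fin n) (hij : i ≠ j) (a : A) :
    (elem A i j hij a : Matrix (Fin n) (Fin n) A) = 1 + single i j a :=
  rfl

theorem elem_mul_elem (i j : Fin n) (hij : i ≠ j) (a b : A) :
    elem A i j hij a * elem A i j hij b = elem A i j hij (a + b) :=
  Subtype.ext (transvection_mul_transvection_same i j hij a b)

theorem elem_inv (i j : Fin n) (hij : i ≠ j) (a : A) :
    (elem A i j hij a)⁻¹ = elem A i j hij (-a) := by
  refine inv_eq_of_mul_eq_one_right ?_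
  rw [elem_mul_elem, add_neg_cancel]
  exact Subtype.ext (transvection_zero i j)

theorem commutatorElement_elem_elem {i j k : Fin n} (hij : i ≠ j) (hjk : j ≠ k) (hik : i ≠ k)
    (a b : A) : ⁅elem A i j hij a, elem A j k hjk b⁆ = elem A i k hik (a * b) := by
  refine Subtype.ext ?_
  simp only [commutatorElement_def, elem_inv, Matrix.SpecialLinearGroup.coe_mul, coe_elem,
    add_mul, mul_add, one_mul, mul_one, single_mul_single_same, ne_eq, hij.symm, hik.symm,
    hjk.symm, not_false_eq_true, single_mul_single_of_ne, add_zero, mul_neg, neg_mul, ← single_neg]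
  abel

theorem elem_mul_elem_mul_inv_of_col_eq_row {i j k : Fin n} (hij : i ≠ j) (hjk : j ≠ k)
    (hik : i ≠ k) (a b : A) :
    elem A i j hij a * elem A j k hjk b * (elem A i j hij a)⁻¹ =
      elem A i k hik (a * b) * elem A j k hjk b := by
  rw [← commutatorElement_elem_elem hij hjk hik, commutatorElement_def, inv_mul_cancel_right]

theorem elem_mul_elem_mul_inv_of_row_eq_col {i j k : Fin n} (hij : i ≠ j) (hjk : j ≠ k)
    (hik : i ≠ k) (a b : A) :
    elem A j k hjk b * elem A i j hij a * (elem A j k hjk b)⁻¹ =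
      elem A i j hij a * elem A i k hik (-(a * b)) := by
  rw [← neg_mul, ← commutatorElement_elem_elem hij hjk hik, ← elem_inv, commutatorElement_def]
  group

end elem

theorem Subgroup.commutatorElement_mul_mem {G : Type*} [Group G] (H : Subgroup G) {p b g : G}
    (hp : p ∈ H) (hb : b ∈ H) (hgp : g * p * g⁻¹ ∈ H) : ⁅p, b * g⁆ ∈ H := by
  have h : ⁅p, b * g⁆ = p * (b * (g * p * g⁻¹)⁻¹ * b⁻¹) := by
    rw [commutatorElement_def]
    group
  rw [h]
  exact H.mul_mem hp (H.mul_mem (H.mul_mem hb (H.inv_mem hgp)) (H.inv_mem hb))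

section Fgrp

variable {A : Type} [CommRing A] {n : ℕ} {π : Ideal A}

theorem elem_mem_Fgrp {i j : Fin n} (hij : i ≠ j) {a : A} (ha : a ∈ π) :
    elem A i j hij a ∈ Fgrp A n π :=
  Subgroup.subset_closure ⟨i, j, hij, a, ha, rfl⟩

theorem conj_elem_mul_mem_Fgrp {i j h : Fin n} (hij : i ≠ j) (hih : i ≠ h) (hhj : h ≠ j)
    (c : A) {a b : A} (ha : a ∈ π) (hb : b ∈ π) :
    elem A j i hij.symm c * elem A i j hij (a * b) * (elem A j i hij.symm c)⁻¹ ∈ Fgrp A n π := by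
  rw [← commutatorElement_elem_elem hih hhj hij, conjugate_commutatorElement,
    elem_mul_elem_mul_inv_of_col_eq_row hij.symm hih hhj.symm,
    elem_mul_elem_mul_inv_of_row_eq_col hhj hij.symm hih.symm, commutatorElement_def]
  have hca : c * a ∈ π := π.mul_mem_left c ha
  have hbc : -(b * c) ∈ π := π.neg_mem (π.mul_mem_right c hb)
  apply_rules [Subgroup.mul_mem, Subgroup.inv_mem, elem_mem_Fgrp]

end Fgrp

theorem suspMat_eq_one_add_mul {A : Type} [CommRing A] {n : ℕ} {k l : Fin n} (hkl : k ≠ l)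
    (m : Fin n) (x y z : A) :
    suspMat A k l x y z =
      1 + (single k m (x * z) + single l m (y * z)) * (single m k y + single m l (-x)) := by
  ext p q
  simp only [suspMat, add_mul, mul_add, single_mul_single_same, Matrix.add_apply, one_apply,
    single_apply]
  grind

theorem suspS_eq_commutatorElement {A : Type} [CommRing A] {n : ℕ} {k l m : Fin n} (hkl : k ≠ l)
    (hkm : k ≠ m) (hlm : l ≠ m) (x y z : A) :
    suspS A k l hkl x y z =
      ⁅elem A k m hkm (x * z) * elem A l m hlm (y * z),
        elem A m k hkm.symm y * elem A m l hlm.symm (-x)⁆ := by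
  set P : Matrix (Fin n) (Fin n) A := single k m (x * z) + single l m (y * z)
  set Q : Matrix (Fin n) (Fin n) A := single m k y + single m l (-x)
  have hPP : P * P = 0 := by simp [P, add_mul, mul_add, hkm.symm, hlm.symm]
  have hQQ : Q * Q = 0 := by simp [Q, add_mul, mul_add, hkm, hlm]
  have hQP : Q * P = 0 := by
    simp [Q, P, add_mul, mul_add, hkl, hkl.symm, mul_left_comm y x z, ← single_add]
  have hP : (1 + single k m (x * z)) * (1 + single l m (y * z)) = 1 + P := by
    simp [P, add_mul, mul_add, hlm.symm, add_assoc]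
  have hP' : (1 + single l m (-(y * z))) * (1 + single k m (-(x * z))) = 1 - P := by
    simp only [P, add_mul, mul_add, one_mul, mul_one, ne_eq, hkm.symm, not_false_eq_true,
      single_mul_single_of_ne, add_zero, sub_eq_add_neg, neg_add_rev, single_neg]
    abel
  have hQ : (1 + single m k y) * (1 + single m l (-x)) = 1 + Q := by
    simp [Q, add_mul, mul_add, hkm, add_assoc]
  have hQ' : (1 + single m l (- -x)) * (1 + single m k (-y)) = 1 - Q := by
    simp only [Q, neg_neg, add_mul, mul_add, one_mul, mul_one, ne_eq, hlm, not_false_eq_true,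
      single_mul_single_of_ne, add_zero, sub_eq_add_neg, neg_add_rev, single_neg]
    abel
  simp only [commutatorElement_def, _root_.mul_inv_rev, elem_inv]
  refine Subtype.ext ?_
  simp only [Matrix.SpecialLinearGroup.coe_mul, coe_elem]
  rw [hP, hP', hQ, hQ', one_add_mul_one_add_mul_one_sub_mul_one_sub hPP hQQ hQP]
  exact suspMat_eq_one_add_mul hkl m x y z

/-- For `n ≥ 3`, `x ∈ A`, `y, z ∈ π` and `k ≠ l`, the `(k,l)`-suspension of the symbol
`S(x,y;z)` lies in the true elementary subgroup `F_n(π)`. -/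
theorem suspension_mem_trueElementary (A : Type) [CommRing A] (π : Ideal A) (n : ℕ)
    (hn : 3 ≤ n) (x y z : A) (hy : y ∈ π) (hz : z ∈ π) (k l : Fin n) (hkl : k ≠ l) :
    suspS A k l hkl x y z ∈ Fgrp A n π := by
  obtain ⟨m, hmk, hml⟩ := Fin.exists_ne_and_ne_of_two_lt k l hn
  rw [suspS_eq_commutatorElement hkl hmk.symm hml.symm]
  have hxz : x * z ∈ π := π.mul_mem_left x hz
  have hyz : y * z ∈ π := π.mul_mem_right z hy
  refine (Fgrp A n π).commutatorElement_mul_mem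
    (mul_mem (elem_mem_Fgrp _ hxz) (elem_mem_Fgrp _ hyz)) (elem_mem_Fgrp _ hy) ?_
  rw [← conj_mul, elem_mul_elem_mul_inv_of_row_eq_col hmk.symm hml hkl]
  refine mul_mem (mul_mem (elem_mem_Fgrp _ hxz) (elem_mem_Fgrp _ ?_)) ?_
  · exact π.neg_mem (π.mul_mem_right _ hxz)
  · exact conj_elem_mul_mem_Fgrp hml.symm hkl.symm hmk.symm (-x) hy hz
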